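/- arXiv:2410.19113 — 2 statements merged into one kernel-verified Lean document; each statement's English description precedes it below -/
import Mathlib

section
/- Let T > 0, c ∈ ℝ, q ≥ 0, μ ∈ (-1/2, 1/2]. If the quadratic polynomial p(y) = 3(2π/T)^3 (y+1/2)^2 + (2π c)/T - (4π/T)(y+1/2) q has negative discriminant, i.e. q^2 < 3c(2π/T)^2, then for every integer k ≥ 0 one has (2π/T)^3 ((k+1+μ)^3 - (k+μ)^3) + (2πc/T) > (2π/T)((k+1+μ) + (k+μ)) q whenever k + μ ≥ 0. -/
open Real in
theorem gkdv_disjoint_of_neg_discriminant (T c q μ : ℝ)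
    (hT : 0 < T) (hq : 0 ≤ q) (hμ1 : -(1/2) < μ) (hμ2 : μ ≤ 1/2)
    (hdisc : q^2 < 3 * c * (2 * π / T)^2) :
    ∀ k : ℤ, 0 ≤ k → 0 ≤ (k : ℝ) + μ →
      (2 * π / T)^3 * (((k : ℝ) + 1 + μ)^3 - ((k : ℝ) + μ)^3) + 2 * π * c / T
        > (2 * π / T) * (((k : ℝ) + 1 + μ) + ((k : ℝ) + μ)) * q := by
  intro k hk hy
  set a : ℝ := 2 * π / T with ha_def
  have ha : 0 < a := by
    have := Real.pi_pos
    positivity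
  set y : ℝ := (k : ℝ) + μ with hy_def
  have key : 3 * a^2 * (y + 1/2)^2 - 2 * (y + 1/2) * q + c > 0 := by
    have h1 := sq_nonneg (3 * a^2 * (y + 1/2) - q)
    have h2 : 0 < 3 * a^2 := by positivity
    nlinarith [h1, hdisc, h2]
  have h3 : (2 * π / T)^3 = a^3 := by rw [ha_def]
  have h4 : 2 * π * c / T = a * c := by rw [ha_def]; ring
  nlinarith [mul_pos ha key, pow_pos ha 3]
end

section
/- Let T > 0, c ∈ ℝ, μ ∈ (-1/2, 1/2], q ≥ 0, and λ ∈ ℂ with λ ≠ 0. Suppose that for every integer k, |λ - i(2π/T)^3(k+μ)^3 - (2πic/T)(k+μ)| > (2π/T)|k+μ| q. Then for any bounded sequence (v̂_k)_{k∈ℤ} of complex numbers and any sequence (Q̂_m) with Σ_{m≠0}|Q̂_m| ≤ q and Q̂_0 = 0, the system v̂_k = ((2πi/T)(k+μ) / (λ - i(2π/T)^3(k+μ)^3 - (2πic/T)(k+μ))) · Σ_ℓ Q̂_{k-ℓ} v̂_ℓ (for all k) admits only the trivial bounded solution v̂ ≡ 0. -/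
/-!
Writing `m k` for the multiplier in front of the convolution, the equation says that `v̂` is a
fixed point of `v ↦ m · (Q̂ ⋆ v)` on bounded sequences, a map whose sup-norm is at most
`sup_k ‖m k‖ · ‖Q̂‖₁`. Each `‖m k‖ q` is `< 1` by hypothesis, and since the denominator of `m k`
grows cubically in `k` while its numerator grows linearly, `‖m k‖ q ≤ 1/2` for all but finitely
many `k`. So the supremum is `< 1`, the map is a contraction, and its only bounded fixed point
is `0`.
-/

open Filter Set Asymptotics Real

theorem exists_lt_forall_le_of_eventually_le {ι α : Type*} [ConditionallyCompleteLinearOrder α]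
    {θ : ι → α} {b c : α} (hb : b < c) (hθ : ∀ k, θ k < c) (hθb : ∀ᶠ k in cofinite, θ k ≤ b) :
    ∃ r < c, ∀ k, θ k ≤ r := by
  have hfin : (insert b (θ '' {k | ¬θ k ≤ b})).Finite :=
    ((eventually_cofinite.mp hθb).image θ).insert b
  refine ⟨sSup (insert b (θ '' {k | ¬θ k ≤ b})), ?_, fun k => ?_⟩
  · rw [hfin.csSup_lt_iff (insert_nonempty _ _)]
    rintro x (rfl | ⟨k, -, rfl⟩)
    exacts [hb, hθ k]
  · by_cases hk : θ k ≤ b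
    · exact hk.trans (le_csSup hfin.bddAbove (mem_insert _ _))
    · exact le_csSup hfin.bddAbove (mem_insert_of_mem _ (mem_image_of_mem θ hk))

theorem eventually_mul_add_le_pow_three (b L : ℝ) : ∀ᶠ x in atTop, b * x + L ≤ x ^ 3 := by
  have hpow : Tendsto (fun x : ℝ => ‖x ^ 3‖) atTop atTop :=
    tendsto_norm_atTop_atTop.comp (tendsto_pow_atTop three_ne_zero)
  have hlo : (fun x : ℝ => b * x + L) =o[atTop] fun x => x ^ 3 := by
    refine IsLittleO.add ?_ (isLittleO_const_left.2 (Or.inr hpow))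
    simpa using (isLittleO_pow_pow_atTop_of_lt (𝕜 := ℝ) (by norm_num : 1 < 3)).const_mul_left b
  filter_upwards [hlo.bound one_pos, eventually_ge_atTop 0] with x hx hx0
  rw [one_mul, Real.norm_of_nonneg (pow_nonneg hx0 3)] at hx
  exact (Real.le_norm_self _).trans hx

section Convolution

variable {G R : Type*} [AddGroup G] [NormedRing R]

theorem norm_tsum_mul_sub_le {Q v : G → R} {S : ℝ} (hQ : Summable (‖Q ·‖))
    (hv : ∀ ℓ, ‖v ℓ‖ ≤ S) (k : G) : ‖∑' ℓ, Q (k - ℓ) * v ℓ‖ ≤ (∑' m, ‖Q m‖) * S := by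
  have hQk : Summable fun ℓ => ‖Q (k - ℓ)‖ := (Equiv.subLeft k).summable_iff.mpr hQ
  have hbound : ∀ ℓ, ‖Q (k - ℓ) * v ℓ‖ ≤ ‖Q (k - ℓ)‖ * S := fun ℓ =>
    (norm_mul_le _ _).trans (mul_le_mul_of_nonneg_left (hv ℓ) (norm_nonneg _))
  have hsum : Summable fun ℓ => ‖Q (k - ℓ) * v ℓ‖ :=
    (hQk.mul_right S).of_nonneg_of_le (fun _ => norm_nonneg _) hbound
  calc ‖∑' ℓ, Q (k - ℓ) * v ℓ‖ ≤ ∑' ℓ, ‖Q (k - ℓ)‖ * S :=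
        (norm_tsum_le_tsum_norm hsum).trans (hsum.tsum_le_tsum hbound (hQk.mul_right S))
    _ = (∑' m, ‖Q m‖) * S := by rw [tsum_mul_right, ← (Equiv.subLeft k).tsum_eq (‖Q ·‖)]; rfl

theorem eq_zero_of_eq_mul_tsum_mul_sub {m Q v : G → R} {r : ℝ} (hr : r < 1)
    (hm : ∀ k, ‖m k‖ * ∑' j, ‖Q j‖ ≤ r) (hQ : Summable (‖Q ·‖))
    (hv : BddAbove (range (‖v ·‖))) (heq : ∀ k, v k = m k * ∑' ℓ, Q (k - ℓ) * v ℓ) (k : G) :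
    v k = 0 := by
  have hle : ∀ j, ‖v j‖ ≤ ⨆ i, ‖v i‖ := le_ciSup hv
  have hS : 0 ≤ ⨆ i, ‖v i‖ := (norm_nonneg _).trans (hle k)
  have hcontr : ∀ j, ‖v j‖ ≤ r * ⨆ i, ‖v i‖ := fun j => calc
    ‖v j‖ ≤ ‖m j‖ * ((∑' i, ‖Q i‖) * ⨆ i, ‖v i‖) := by
        rw [heq j]
        exact (norm_mul_le _ _).trans
          (mul_le_mul_of_nonneg_left (norm_tsum_mul_sub_le hQ hle j) (norm_nonneg _))
    _ ≤ r * ⨆ i, ‖v i‖ := by rw [← mul_assoc]; exact mul_le_mul_of_nonneg_right (hm j) hS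
  have : Nonempty G := ⟨k⟩
  have hS0 : ⨆ i, ‖v i‖ ≤ 0 := by nlinarith [ciSup_le hcontr]
  exact norm_le_zero_iff.mp ((hle k).trans hS0)

end Convolution

theorem norm_add_pow_three_sub_mul_ge (l z : ℂ) (c : ℝ) :
    ‖z‖ ^ 3 - ‖l‖ - |c| * ‖z‖ ≤ ‖l + z ^ 3 - c * z‖ := by
  calc ‖z‖ ^ 3 - ‖l‖ - |c| * ‖z‖
      = ‖(l + z ^ 3 - c * z) + -l + c * z‖ - ‖l‖ - |c| * ‖z‖ := by
        rw [← norm_pow]; ring_nf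
    _ ≤ ‖l + z ^ 3 - c * z‖ := by
        have := norm_add₃_le (a := l + z ^ 3 - c * z) (b := -l) (c := c * z)
        rw [norm_neg, norm_mul, Complex.norm_real, Real.norm_eq_abs] at this
        linarith

/-- The Fourier symbol of `∂ₓ` on the quasi-periodic mode `e^{2πi(k+μ)x/T}`. -/
noncomputable def derivSymbol (T μ : ℝ) (k : ℤ) : ℂ :=
  2 * π * Complex.I / T * (((k : ℝ) + μ : ℝ) : ℂ)

/-- `λ` minus the centre of the `k`-th Gershgorin disk `D_k(μ)`. -/
noncomputable def gkdvDenom (T c μ : ℝ) (l : ℂ) (k : ℤ) : ℂ :=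
  l - Complex.I * ((2 * π / T) ^ 3 * ((k : ℝ) + μ) ^ 3 : ℝ)
    - 2 * π * Complex.I * c / T * (((k : ℝ) + μ : ℝ) : ℂ)

theorem gkdvDenom_eq (T c μ : ℝ) (l : ℂ) (k : ℤ) :
    gkdvDenom T c μ l k = l + derivSymbol T μ k ^ 3 - c * derivSymbol T μ k := by
  simp only [gkdvDenom, derivSymbol]
  push_cast
  ring_nf
  rw [Complex.I_pow_three]
  ring

theorem norm_derivSymbol {T : ℝ} (hT : 0 < T) (μ : ℝ) (k : ℤ) :
    ‖derivSymbol T μ k‖ = 2 * π / T * |(k : ℝ) + μ| := by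
  rw [derivSymbol, norm_mul, Complex.norm_real, Real.norm_eq_abs]
  simp [abs_of_pos hT, abs_of_pos pi_pos]

theorem tendsto_norm_derivSymbol {T : ℝ} (hT : 0 < T) (μ : ℝ) :
    Tendsto (fun k => ‖derivSymbol T μ k‖) cofinite atTop := by
  simp only [norm_derivSymbol hT]
  refine Tendsto.const_mul_atTop (by positivity) ?_
  exact tendsto_norm_cocompact_atTop.comp
    (Tendsto.comp (Homeomorph.addRight μ).map_cocompact.le Int.tendsto_coe_cofinite)

theorem eventually_mul_norm_derivSymbol_le_norm_gkdvDenom {T : ℝ} (hT : 0 < T) (c μ : ℝ) (l : ℂ)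
    (C : ℝ) :
    ∀ᶠ k in cofinite, C * ‖derivSymbol T μ k‖ ≤ ‖gkdvDenom T c μ l k‖ := by
  filter_upwards [tendsto_norm_derivSymbol hT μ
    |>.eventually (eventually_mul_add_le_pow_three (C + |c|) ‖l‖)] with k hk
  rw [gkdvDenom_eq]
  linarith [norm_add_pow_three_sub_mul_ge l (derivSymbol T μ k) c]

open Real in
theorem gkdv_gershgorin_resolvent_general (T c q μ : ℝ)
    (hT : 0 < T)
    (l : ℂ)
    (hout : ∀ k : ℤ,
      ‖l - Complex.I * ((2 * π / T)^3 * ((k : ℝ) + μ)^3 : ℝ)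
          - 2 * π * Complex.I * c / T * (((k : ℝ) + μ : ℝ) : ℂ)‖
        > 2 * π / T * |(k : ℝ) + μ| * q)
    (v Q : ℤ → ℂ)
    (hv : ∃ M : ℝ, ∀ k : ℤ, ‖v k‖ ≤ M)
    (hQsum : Summable fun m : ℤ => ‖Q m‖)
    (hQq : (∑' m : ℤ, ‖Q m‖) ≤ q)
    (heq : ∀ k : ℤ, v k =
      (2 * π * Complex.I / T * (((k : ℝ) + μ : ℝ) : ℂ) /
        (l - Complex.I * ((2 * π / T)^3 * ((k : ℝ) + μ)^3 : ℝ)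
          - 2 * π * Complex.I * c / T * (((k : ℝ) + μ : ℝ) : ℂ))) *
        ∑' ℓ : ℤ, Q (k - ℓ) * v ℓ) :
    ∀ k : ℤ, v k = 0 := by
  set s := ∑' m : ℤ, ‖Q m‖
  have hs : 0 ≤ s := tsum_nonneg fun _ => norm_nonneg _
  have hlt : ∀ k, ‖derivSymbol T μ k / gkdvDenom T c μ l k‖ * s < 1 := fun k => by
    have hk : ‖derivSymbol T μ k‖ * q < ‖gkdvDenom T c μ l k‖ := by
      rw [norm_derivSymbol hT]; exact hout k
    have hpos : 0 < ‖gkdvDenom T c μ l k‖ :=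
      (mul_nonneg (norm_nonneg _) (hs.trans hQq)).trans_lt hk
    rw [norm_div, div_mul_eq_mul_div, div_lt_one hpos]
    exact (mul_le_mul_of_nonneg_left hQq (norm_nonneg _)).trans_lt hk
  have htail : ∀ᶠ k in cofinite, ‖derivSymbol T μ k / gkdvDenom T c μ l k‖ * s ≤ 1 / 2 := by
    filter_upwards [eventually_mul_norm_derivSymbol_le_norm_gkdvDenom hT c μ l (2 * s)] with k hk
    rw [norm_div, div_mul_eq_mul_div]
    exact div_le_of_le_mul₀ (norm_nonneg _) (by norm_num) (by linarith)
  obtain ⟨r, hr, hrm⟩ := exists_lt_forall_le_of_eventually_le (by norm_num) hlt htail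
  obtain ⟨M, hM⟩ := hv
  exact eq_zero_of_eq_mul_tsum_mul_sub hr hrm hQsum ⟨M, forall_mem_range.2 hM⟩ heq

open Real in
theorem gkdv_gershgorin_resolvent (T c q μ : ℝ)
    (hT : 0 < T) (hq : 0 ≤ q) (hμ1 : -(1/2) < μ) (hμ2 : μ ≤ 1/2)
    (l : ℂ) (hl : l ≠ 0)
    (hout : ∀ k : ℤ,
      ‖l - Complex.I * ((2 * π / T)^3 * ((k : ℝ) + μ)^3 : ℝ)
          - 2 * π * Complex.I * c / T * (((k : ℝ) + μ : ℝ) : ℂ)‖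
        > 2 * π / T * |(k : ℝ) + μ| * q)
    (v Q : ℤ → ℂ)
    (hv : ∃ M : ℝ, ∀ k : ℤ, ‖v k‖ ≤ M)
    (hQ0 : Q 0 = 0)
    (hQsum : Summable fun m : ℤ => ‖Q m‖)
    (hQq : (∑' m : ℤ, ‖Q m‖) ≤ q)
    (heq : ∀ k : ℤ, v k =
      (2 * π * Complex.I / T * (((k : ℝ) + μ : ℝ) : ℂ) /
        (l - Complex.I * ((2 * π / T)^3 * ((k : ℝ) + μ)^3 : ℝ)
          - 2 * π * Complex.I * c / T * (((k : ℝ) + μ : ℝ) : ℂ))) *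
        ∑' ℓ : ℤ, Q (k - ℓ) * v ℓ) :
    ∀ k : ℤ, v k = 0 :=
  gkdv_gershgorin_resolvent_general T c q μ hT l hout v Q hv hQsum hQq heq
end
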